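/- arXiv:1801.10550 — 2 statements merged into one kernel-verified Lean document; each statement's English description precedes it below -/
import Mathlib

section
/- Let Z and T be nonempty finite sets, let A > 0, and let f : Z × T → [0,1] satisfy (1/|T|)·∑_{t∈T} f(z,t) ≤ A for every z ∈ Z. If L is a positive integer with (3 − e)·A·L > ln|Z| (where e = exp(1) and ln is the natural logarithm), then there exist t_1, …, t_L ∈ T (not necessarily distinct) such that ∑_{i=1}^L f(z, t_i) ≤ 3·A·L for every z ∈ Z. -/
/-- **Existence of a good ground set via the Chernoff bound.**
If `f : Z × T → [0,1]` has average at most `A` over `T` for every `z`, and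
`(3 - e)·A·L > ln |Z|`, then one can pick `t₁, …, t_L ∈ T` (with repetition allowed)
such that `∑ i, f (z, tᵢ) ≤ 3·A·L` for every `z ∈ Z`. -/
theorem exists_ground_set
    {Z T : Type*} [Fintype Z] [Nonempty Z] [Fintype T] [Nonempty T]
    (A : ℝ) (hA : 0 < A) (f : Z × T → ℝ)
    (hf : ∀ p, f p ∈ Set.Icc (0 : ℝ) 1)
    (havg : ∀ z : Z, (∑ t : T, f (z, t)) / (Fintype.card T : ℝ) ≤ A)
    (L : ℕ) (hL : 0 < L)
    (hcard : Real.log (Fintype.card Z) < (3 - Real.exp 1) * A * L) :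
    ∃ t : Fin L → T, ∀ z : Z, ∑ i : Fin L, f (z, t i) ≤ 3 * A * L := by
  classical
  by_contra hcon
  push_neg at hcon
  set M : ℕ := Fintype.card T with hM
  set N : ℕ := Fintype.card Z with hN
  have hM0 : 0 < M := Fintype.card_pos
  have hN0 : 0 < N := Fintype.card_pos
  have he1 : (1:ℝ) ≤ Real.exp 1 := by
    have := Real.add_one_le_exp (1:ℝ); linarith
  -- pointwise convexity bound: exp x ≤ 1 + (e-1)·x on [0,1]
  have hexp : ∀ x : ℝ, x ∈ Set.Icc (0:ℝ) 1 → Real.exp x ≤ 1 + (Real.exp 1 - 1) * x := by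
    intro x hx
    have h := convexOn_exp.2 (Set.mem_univ (0:ℝ)) (Set.mem_univ (1:ℝ))
      (by linarith [hx.2] : (0:ℝ) ≤ 1 - x) hx.1 (by ring)
    simp only [smul_eq_mul, mul_zero, mul_one, zero_add, Real.exp_zero] at h
    linarith
  set c : ℝ := (3 - Real.exp 1) * A * L with hc
  let bad : Z → Finset (Fin L → T) := fun z =>
    Finset.univ.filter (fun t => 3*A*L < ∑ i, f (z, t i))
  have hbad : ∀ z, ((bad z).card : ℝ) ≤ (M:ℝ)^L * Real.exp (-c) := by
    intro z
    have h1 : ((bad z).card : ℝ) ≤ ∑ t : Fin L → T, Real.exp (∑ i, f (z, t i) - 3*A*L) := by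
      calc ((bad z).card : ℝ) = ∑ _t ∈ bad z, (1:ℝ) := by simp
        _ ≤ ∑ t ∈ bad z, Real.exp (∑ i, f (z, t i) - 3*A*L) := by
            apply Finset.sum_le_sum
            intro t ht
            have h := (Finset.mem_filter.mp ht).2
            have h0 : (0:ℝ) ≤ ∑ i, f (z, t i) - 3*A*L := by linarith
            calc (1:ℝ) = Real.exp 0 := Real.exp_zero.symm
              _ ≤ _ := Real.exp_le_exp.mpr h0
        _ ≤ ∑ t : Fin L → T, Real.exp (∑ i, f (z, t i) - 3*A*L) :=
            Finset.sum_le_sum_of_subset_of_nonneg (Finset.filter_subset _ _)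
              (fun t _ _ => (Real.exp_pos _).le)
    have h2 : ∑ t : Fin L → T, Real.exp (∑ i, f (z, t i) - 3*A*L)
        = Real.exp (-(3*A*L)) * (∑ s : T, Real.exp (f (z, s)))^L := by
      have step : ∀ t : Fin L → T, Real.exp (∑ i, f (z, t i) - 3*A*L)
          = Real.exp (-(3*A*L)) * ∏ i : Fin L, Real.exp (f (z, t i)) := by
        intro t
        rw [sub_eq_add_neg, Real.exp_add, Real.exp_sum, mul_comm]
      rw [Finset.sum_congr rfl (fun t _ => step t), ← Finset.mul_sum]
      congr 1
      have := Finset.prod_univ_sum (fun _ : Fin L => (Finset.univ : Finset T))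
        (fun _ s => Real.exp (f (z, s)))
      rw [Fintype.piFinset_univ] at this
      rw [← this, Finset.prod_const, Finset.card_univ, Fintype.card_fin]
    -- bound the base
    have h3 : ∑ s : T, Real.exp (f (z, s)) ≤ (M:ℝ) * Real.exp ((Real.exp 1 - 1) * A) := by
      have hsumf : ∑ s : T, f (z, s) ≤ A * M := by
        have := havg z
        rw [div_le_iff₀ (by exact_mod_cast hM0)] at this
        exact this
      have hb : ∑ s : T, Real.exp (f (z, s)) ≤ (M:ℝ) * (1 + (Real.exp 1 - 1) * A) := by
        calc ∑ s : T, Real.exp (f (z, s))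
            ≤ ∑ s : T, (1 + (Real.exp 1 - 1) * f (z, s)) :=
              Finset.sum_le_sum (fun s _ => hexp _ (hf (z, s)))
          _ = (M:ℝ) + (Real.exp 1 - 1) * ∑ s : T, f (z, s) := by
              rw [Finset.sum_add_distrib, ← Finset.mul_sum]
              simp [hM]
          _ ≤ (M:ℝ) + (Real.exp 1 - 1) * (A * M) := by
              have : (0:ℝ) ≤ Real.exp 1 - 1 := by linarith
              nlinarith
          _ = (M:ℝ) * (1 + (Real.exp 1 - 1) * A) := by ring
      have h4 : (1 + (Real.exp 1 - 1) * A) ≤ Real.exp ((Real.exp 1 - 1) * A) := by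
        have := Real.add_one_le_exp ((Real.exp 1 - 1) * A); linarith
      have hMnn : (0:ℝ) ≤ (M:ℝ) := by positivity
      nlinarith
    have hbase_nn : (0:ℝ) ≤ ∑ s : T, Real.exp (f (z, s)) :=
      Finset.sum_nonneg fun s _ => (Real.exp_pos _).le
    calc ((bad z).card : ℝ)
        ≤ Real.exp (-(3*A*L)) * (∑ s : T, Real.exp (f (z, s)))^L := by rw [← h2]; exact h1
      _ ≤ Real.exp (-(3*A*L)) * ((M:ℝ) * Real.exp ((Real.exp 1 - 1) * A))^L := by
          apply mul_le_mul_of_nonneg_left _ (Real.exp_pos _).le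
          exact pow_le_pow_left₀ hbase_nn h3 L
      _ ≤ (M:ℝ)^L * Real.exp (-c) := by
          rw [mul_pow, ← Real.exp_nat_mul, ← mul_assoc, mul_comm (Real.exp (-(3*A*L))),
            mul_assoc, ← Real.exp_add]
          apply mul_le_mul_of_nonneg_left _ (by positivity)
          apply Real.exp_le_exp.mpr
          have hAL : (0:ℝ) ≤ A * L := by positivity
          rw [hc]; nlinarith
  -- total count
  have hcover : (Finset.univ : Finset (Fin L → T)) ⊆ Finset.univ.biUnion bad := by
    intro t _
    obtain ⟨z, hz⟩ := hcon t
    exact Finset.mem_biUnion.mpr ⟨z, Finset.mem_univ z, Finset.mem_filter.mpr ⟨Finset.mem_univ t, hz⟩⟩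
  have hcards : ((M:ℝ))^L ≤ ∑ z : Z, ((bad z).card : ℝ) := by
    have h1 : (Finset.univ : Finset (Fin L → T)).card ≤ ∑ z : Z, (bad z).card := by
      calc (Finset.univ : Finset (Fin L → T)).card
          ≤ (Finset.univ.biUnion bad).card := Finset.card_le_card hcover
        _ ≤ ∑ z : Z, (bad z).card := Finset.card_biUnion_le
    have h2 : (Finset.univ : Finset (Fin L → T)).card = M ^ L := by
      rw [Finset.card_univ, Fintype.card_fun, Fintype.card_fin]
    rw [h2] at h1
    exact_mod_cast h1
  have hfinal : ∑ z : Z, ((bad z).card : ℝ) < (M:ℝ)^L := by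
    have hNc : (N:ℝ) * Real.exp (-c) < 1 := by
      have hNe : (N:ℝ) < Real.exp c := by
        have := Real.exp_lt_exp.mpr hcard
        rwa [Real.exp_log (by exact_mod_cast hN0)] at this
      have := mul_lt_mul_of_pos_right hNe (Real.exp_pos (-c))
      rwa [← Real.exp_add, add_neg_cancel, Real.exp_zero] at this
    calc ∑ z : Z, ((bad z).card : ℝ)
        ≤ ∑ _z : Z, (M:ℝ)^L * Real.exp (-c) := Finset.sum_le_sum fun z _ => hbad z
      _ = (N:ℝ) * Real.exp (-c) * (M:ℝ)^L := by
          rw [Finset.sum_const, Finset.card_univ]; push_cast [hN]; ring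
      _ < 1 * (M:ℝ)^L := by
          apply mul_lt_mul_of_pos_right hNc
          positivity
      _ = (M:ℝ)^L := one_mul _
  linarith
end

section
/- Let P be a probability distribution on a nonempty finite set 𝒳. For every ε > 0 there exists α₀ > 0 such that for every α ∈ (0, α₀] there exists N ∈ ℕ such that for all n ≥ N: 2^{n(H(P)−ε)} ≤ |𝒯^n_{P,α}| ≤ 2^{n(H(P)+ε)}. -/
set_option linter.unusedSectionVars false
set_option linter.unusedVariables false
set_option maxHeartbeats 1000000

open scoped BigOperators
open Classical

noncomputable section

/-- Number of occurrences of the symbol `a` in the sequence `x`. -/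
def occ {𝒳 : Type*} [Fintype 𝒳] [DecidableEq 𝒳] {n : ℕ} (x : Fin n → 𝒳) (a : 𝒳) : ℕ :=
  (Finset.univ.filter fun t => x t = a).card

/-- The set of `α`-typical sequences of length `n` for the distribution `P`:
`𝒯^n_{P,α} = { xⁿ : |N(a|xⁿ)/n − P a| ≤ α/|𝒳| for all a }`. -/
def typicalSet {𝒳 : Type*} [Fintype 𝒳] [DecidableEq 𝒳] (P : 𝒳 → ℝ) (α : ℝ) (n : ℕ) :
    Finset (Fin n → 𝒳) :=
  Finset.univ.filter fun x =>
    ∀ a : 𝒳, |(occ x a : ℝ) / n - P a| ≤ α / (Fintype.card 𝒳 : ℝ)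

/-- Shannon entropy (base 2), with the convention `0 · log₂ 0 = 0`. -/
def shannonEntropy {𝒳 : Type*} [Fintype 𝒳] (P : 𝒳 → ℝ) : ℝ :=
  -∑ x, P x * Real.logb 2 (P x)

section Helpers

open Finset

variable {𝒳 : Type*} [Fintype 𝒳] [DecidableEq 𝒳]

lemma sum_prod_eq (n : ℕ) (F : Fin n → 𝒳 → ℝ) :
    ∑ x : Fin n → 𝒳, ∏ u, F u (x u) = ∏ u, ∑ a, F u a := by
  rw [Finset.prod_univ_sum, Fintype.piFinset_univ]

lemma sum_mu (P : 𝒳 → ℝ) (hP1 : ∑ x, P x = 1) (n : ℕ) :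
    ∑ x : Fin n → 𝒳, ∏ t, P (x t) = 1 := by
  rw [sum_prod_eq]; simp [hP1]

lemma exp_single (P : 𝒳 → ℝ) (hP1 : ∑ x, P x = 1) {n : ℕ} (t : Fin n) (g : 𝒳 → ℝ) :
    ∑ x : Fin n → 𝒳, (∏ u, P (x u)) * g (x t) = ∑ a, P a * g a := by
  have h : ∀ x : Fin n → 𝒳, (∏ u, P (x u)) * g (x t)
      = ∏ u, (P (x u) * (if u = t then g (x u) else 1)) := by
    intro x
    rw [Finset.prod_mul_distrib, Finset.prod_ite_eq']
    simp
  simp_rw [h]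
  rw [sum_prod_eq n (fun u a => P a * (if u = t then g a else 1))]
  have h2 : ∀ u : Fin n, (∑ a, P a * (if u = t then g a else 1))
      = if u = t then ∑ a, P a * g a else 1 := by
    intro u
    by_cases hu : u = t <;> simp [hu, hP1]
  simp_rw [h2, Finset.prod_ite_eq']
  simp

lemma exp_pair (P : 𝒳 → ℝ) (hP1 : ∑ x, P x = 1) {n : ℕ} (t s : Fin n) (hts : t ≠ s)
    (g h : 𝒳 → ℝ) :
    ∑ x : Fin n → 𝒳, (∏ u, P (x u)) * (g (x t) * h (x s))
      = (∑ a, P a * g a) * (∑ a, P a * h a) := by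
  have key : ∀ x : Fin n → 𝒳, (∏ u, P (x u)) * (g (x t) * h (x s))
      = ∏ u, (P (x u) * ((if u = t then g (x u) else 1) * (if u = s then h (x u) else 1))) := by
    intro x
    rw [Finset.prod_mul_distrib, Finset.prod_mul_distrib, Finset.prod_ite_eq',
      Finset.prod_ite_eq']
    simp [mul_assoc]
  simp_rw [key]
  rw [sum_prod_eq n (fun u a => P a * ((if u = t then g a else 1) * (if u = s then h a else 1)))]
  have h2 : ∀ u : Fin n, (∑ a, P a * ((if u = t then g a else 1) * (if u = s then h a else 1)))
      = (if u = t then ∑ a, P a * g a else 1) * (if u = s then ∑ a, P a * h a else 1) := by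
    intro u
    by_cases hu : u = t
    · subst hu
      simp [Ne.symm, hts, hP1]
    · by_cases hu' : u = s <;> simp [hu, hu', hP1, Ne.symm hts]
  simp_rw [h2]
  rw [Finset.prod_mul_distrib, Finset.prod_ite_eq', Finset.prod_ite_eq']
  simp

lemma occ_cast {n : ℕ} (x : Fin n → 𝒳) (a : 𝒳) :
    (occ x a : ℝ) = ∑ t, if x t = a then (1:ℝ) else 0 := by
  rw [occ, Finset.card_filter]
  push_cast
  simp

lemma second_moment (P : 𝒳 → ℝ) (hP0 : ∀ x, 0 ≤ P x) (hP1 : ∑ x, P x = 1)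
    {n : ℕ} (a : 𝒳) :
    ∑ x : Fin n → 𝒳, (∏ u, P (x u)) * ((occ x a : ℝ) - n * P a)^2 ≤ n := by
  set f : 𝒳 → ℝ := fun b => (if b = a then (1:ℝ) else 0) - P a with hfdef
  have hPa1 : P a ≤ 1 := hP1 ▸ Finset.single_le_sum (fun b _ => hP0 b) (mem_univ a)
  have hf : ∀ b, f b * f b ≤ 1 := by
    intro b; have := hP0 a; by_cases hb : b = a <;> simp [hfdef, hb] <;> nlinarith
  have hzero : (∑ b, P b * f b) = 0 := by
    simp only [hfdef, mul_sub, Finset.sum_sub_distrib, mul_ite, mul_one, mul_zero,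
      Finset.sum_ite_eq', mem_univ, if_pos, ← Finset.sum_mul, hP1, one_mul]
    ring
  have hdev : ∀ x : Fin n → 𝒳, ((occ x a : ℝ) - n * P a) = ∑ t, f (x t) := by
    intro x
    simp [hfdef, Finset.sum_sub_distrib, ← occ_cast, mul_comm, occ]
  calc ∑ x : Fin n → 𝒳, (∏ u, P (x u)) * ((occ x a : ℝ) - n * P a)^2
      = ∑ t : Fin n, ∑ s : Fin n, ∑ x : Fin n → 𝒳, (∏ u, P (x u)) * (f (x t) * f (x s)) := by
        simp_rw [hdev, pow_two, Finset.sum_mul_sum, Finset.mul_sum]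
        rw [Finset.sum_comm]
        apply Finset.sum_congr rfl; intro t _; exact Finset.sum_comm
    _ ≤ ∑ _t : Fin n, ∑ _s : Fin n, (if _t = _s then (1:ℝ) else 0) := by
        apply Finset.sum_le_sum; intro t _; apply Finset.sum_le_sum; intro s _
        by_cases hts : t = s
        · subst hts
          rw [if_pos rfl, exp_single P hP1 t (fun b => f b * f b)]
          calc ∑ b, P b * (f b * f b) ≤ ∑ b, P b * 1 :=
                Finset.sum_le_sum fun b _ => mul_le_mul_of_nonneg_left (hf b) (hP0 b)
            _ = 1 := by simp [hP1]
        · rw [if_neg hts, exp_pair P hP1 t s hts f f, hzero]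
          simp
    _ ≤ n := by simp

variable [Nonempty 𝒳]

lemma kpos : (0:ℝ) < (Fintype.card 𝒳 : ℝ) := by
  exact_mod_cast Fintype.card_pos

lemma bad_measure (P : 𝒳 → ℝ) (hP0 : ∀ x, 0 ≤ P x) (hP1 : ∑ x, P x = 1)
    {n : ℕ} (hn : 0 < n) {α : ℝ} (hα : 0 < α) (a : 𝒳) :
    ∑ x ∈ univ.filter (fun x : Fin n → 𝒳 =>
        ¬ |(occ x a : ℝ) / n - P a| ≤ α / (Fintype.card 𝒳 : ℝ)), ∏ t, P (x t)
      ≤ (Fintype.card 𝒳 : ℝ)^2 / (n * α^2) := by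
  set k : ℝ := (Fintype.card 𝒳 : ℝ) with hk
  have hk0 : (0:ℝ) < k := kpos
  have hn0 : (0:ℝ) < (n:ℝ) := by exact_mod_cast hn
  set c : ℝ := ((n:ℝ) * α / k)^2 with hc
  have hc0 : 0 < c := by positivity
  have h1 : ∀ x ∈ univ.filter (fun x : Fin n → 𝒳 =>
      ¬ |(occ x a : ℝ) / n - P a| ≤ α / k), c ≤ ((occ x a : ℝ) - n * P a)^2 := by
    intro x hx
    rw [Finset.mem_filter] at hx
    have hgt : α / k < |(occ x a : ℝ) / n - P a| := lt_of_not_ge hx.2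
    have heq : ((occ x a : ℝ) - n * P a) = n * ((occ x a : ℝ) / n - P a) := by
      field_simp
    rw [heq, hc]
    have : (n:ℝ) * (α/k) ≤ (n:ℝ) * |(occ x a : ℝ) / n - P a| :=
        mul_le_mul_of_nonneg_left hgt.le hn0.le
    calc ((n:ℝ) * α / k)^2 = ((n:ℝ) * (α/k))^2 := by ring
        _ ≤ ((n:ℝ) * |(occ x a : ℝ) / n - P a|)^2 := by
            apply pow_le_pow_left₀ (by positivity) this
        _ = ((n:ℝ) * ((occ x a : ℝ) / n - P a))^2 := by
            rw [mul_pow, mul_pow, sq_abs]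
  have h2 : c * ∑ x ∈ univ.filter (fun x : Fin n → 𝒳 =>
      ¬ |(occ x a : ℝ) / n - P a| ≤ α / k), ∏ t, P (x t) ≤ n := by
    rw [Finset.mul_sum]
    calc ∑ x ∈ univ.filter (fun x : Fin n → 𝒳 =>
          ¬ |(occ x a : ℝ) / n - P a| ≤ α / k), c * ∏ t, P (x t)
        ≤ ∑ x ∈ univ.filter (fun x : Fin n → 𝒳 =>
          ¬ |(occ x a : ℝ) / n - P a| ≤ α / k),
            (∏ t, P (x t)) * ((occ x a : ℝ) - n * P a)^2 := by
          apply Finset.sum_le_sum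
          intro x hx
          rw [mul_comm]
          exact mul_le_mul_of_nonneg_left (h1 x hx) (Finset.prod_nonneg fun t _ => hP0 _)
      _ ≤ ∑ x : Fin n → 𝒳, (∏ t, P (x t)) * ((occ x a : ℝ) - n * P a)^2 := by
          apply Finset.sum_le_sum_of_subset_of_nonneg (Finset.filter_subset _ _)
          intro x _ _
          have := Finset.prod_nonneg (fun t (_ : t ∈ univ) => hP0 (x t))
          positivity
      _ ≤ n := second_moment P hP0 hP1 a
  have h3 : ∑ x ∈ univ.filter (fun x : Fin n → 𝒳 =>
      ¬ |(occ x a : ℝ) / n - P a| ≤ α / k), ∏ t, P (x t) ≤ (n:ℝ) / c := by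
    rw [le_div_iff₀ hc0, mul_comm]
    exact h2
  refine h3.trans (le_of_eq ?_)
  rw [hc]
  field_simp

lemma typical_measure (P : 𝒳 → ℝ) (hP0 : ∀ x, 0 ≤ P x) (hP1 : ∑ x, P x = 1)
    {α : ℝ} (hα : 0 < α) {n : ℕ} (hn : 0 < n)
    (hbig : 2 * (Fintype.card 𝒳 : ℝ)^3 / α^2 ≤ n) :
    (1:ℝ)/2 ≤ ∑ x ∈ typicalSet P α n, ∏ t, P (x t) := by
  set k : ℝ := (Fintype.card 𝒳 : ℝ) with hk
  have hk0 : (0:ℝ) < k := kpos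
  have hn0 : (0:ℝ) < (n:ℝ) := by exact_mod_cast hn
  set cond : (Fin n → 𝒳) → Prop :=
    fun x => ∀ a : 𝒳, |(occ x a : ℝ) / n - P a| ≤ α / k with hcond
  have htot : (∑ x ∈ typicalSet P α n, ∏ t, P (x t))
      + ∑ x ∈ univ.filter (fun x => ¬ cond x), ∏ t, P (x t) = 1 := by
    rw [typicalSet]
    rw [Finset.sum_filter_add_sum_filter_not]
    exact sum_mu P hP1 n
  have hmono : ∑ x ∈ univ.filter (fun x => ¬ cond x), ∏ t, P (x t)
      ≤ ∑ a : 𝒳, ∑ x ∈ univ.filter (fun x : Fin n → 𝒳 =>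
          ¬ |(occ x a : ℝ) / n - P a| ≤ α / k), ∏ t, P (x t) := by
    have hnn : ∀ (x : Fin n → 𝒳) (a : 𝒳),
        0 ≤ (if ¬ |(occ x a : ℝ) / n - P a| ≤ α / k then ∏ t, P (x t) else 0) := by
      intro x a
      split
      · exact Finset.prod_nonneg fun t _ => hP0 _
      · exact le_rfl
    calc ∑ x ∈ univ.filter (fun x => ¬ cond x), ∏ t, P (x t)
        ≤ ∑ x ∈ univ.filter (fun x => ¬ cond x), ∑ a : 𝒳,
            (if ¬ |(occ x a : ℝ) / n - P a| ≤ α / k then ∏ t, P (x t) else 0) := by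
          apply Finset.sum_le_sum
          intro x hx
          rw [Finset.mem_filter, hcond] at hx
          obtain ⟨a₀, ha₀⟩ := not_forall.1 hx.2
          have := Finset.single_le_sum (f := fun a : 𝒳 =>
            (if ¬ |(occ x a : ℝ) / n - P a| ≤ α / k then ∏ t, P (x t) else 0))
            (fun a _ => hnn x a) (Finset.mem_univ a₀)
          simpa [ha₀] using this
      _ ≤ ∑ x : Fin n → 𝒳, ∑ a : 𝒳,
            (if ¬ |(occ x a : ℝ) / n - P a| ≤ α / k then ∏ t, P (x t) else 0) := by
          apply Finset.sum_le_sum_of_subset_of_nonneg (Finset.filter_subset _ _)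
          intro x _ _
          exact Finset.sum_nonneg fun a _ => hnn x a
      _ = ∑ a : 𝒳, ∑ x ∈ univ.filter (fun x : Fin n → 𝒳 =>
            ¬ |(occ x a : ℝ) / n - P a| ≤ α / k), ∏ t, P (x t) := by
          rw [Finset.sum_comm]
          exact Finset.sum_congr rfl fun a _ => (Finset.sum_filter _ _).symm
  have hbd : ∑ a : 𝒳, ∑ x ∈ univ.filter (fun x : Fin n → 𝒳 =>
      ¬ |(occ x a : ℝ) / n - P a| ≤ α / k), ∏ t, P (x t) ≤ k^3 / (n * α^2) := by
    calc ∑ a : 𝒳, ∑ x ∈ univ.filter (fun x : Fin n → 𝒳 =>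
        ¬ |(occ x a : ℝ) / n - P a| ≤ α / k), ∏ t, P (x t)
        ≤ ∑ _a : 𝒳, k^2 / (n * α^2) :=
          Finset.sum_le_sum fun a _ => bad_measure P hP0 hP1 hn hα a
      _ = k^3 / (n * α^2) := by
          rw [Finset.sum_const, nsmul_eq_mul, Finset.card_univ, ← hk]
          field_simp
  have hhalf : k^3 / (n * α^2) ≤ 1/2 := by
    rw [div_le_div_iff₀ (by positivity) (by norm_num)]
    have : 2 * k^3 / α^2 * α^2 ≤ (n:ℝ) * α^2 :=
      mul_le_mul_of_nonneg_right hbig (by positivity)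
    rw [div_mul_cancel₀] at this
    · linarith
    · positivity
  linarith

lemma prod_comp_occ {n : ℕ} (x : Fin n → 𝒳) (f : 𝒳 → ℝ) :
    ∏ t, f (x t) = ∏ a, f a ^ occ x a := by
  rw [← Finset.prod_fiberwise_of_maps_to (g := x) (t := univ)
    (fun t _ => Finset.mem_univ (x t)) (fun t => f (x t))]
  refine Finset.prod_congr rfl fun a _ => ?_
  rw [occ, Finset.prod_congr rfl (fun t ht => by rw [(Finset.mem_filter.1 ht).2]),
    Finset.prod_const]

lemma sum_occ {n : ℕ} (x : Fin n → 𝒳) : ∑ a, occ x a = n := by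
  have := Finset.card_eq_sum_card_fiberwise (f := x) (s := univ) (t := univ)
    (fun t _ => Finset.mem_univ _)
  simp only [Finset.card_univ, Fintype.card_fin] at this
  simp only [occ]
  exact this.symm

lemma prod_pow_eq_rpow {n : ℕ} (hn : 0 < n) (Q : 𝒳 → ℝ) (hQ0 : ∀ a, 0 ≤ Q a)
    (c : 𝒳 → ℕ) (hzero : ∀ a, Q a = 0 → c a = 0) :
    ∏ a, Q a ^ c a = (2:ℝ) ^ (∑ a, (c a : ℝ) * Real.logb 2 (Q a)) := by
  rw [Real.rpow_sum_of_pos (by norm_num : (0:ℝ) < 2)]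
  refine Finset.prod_congr rfl fun a _ => ?_
  rcases eq_or_lt_of_le (hQ0 a) with h | h
  · rw [hzero a h.symm]
    simp
  · rw [mul_comm, Real.rpow_mul (by norm_num : (0:ℝ) ≤ 2), Real.rpow_logb
      (by norm_num) (by norm_num) h, Real.rpow_natCast]

lemma type_count {n : ℕ} (hn : 0 < n) (c : 𝒳 → ℕ) (hc : ∑ a, c a = n) :
    (((univ.filter fun x : Fin n → 𝒳 => occ x = c)).card : ℝ)
      ≤ (2:ℝ) ^ ((n : ℝ) * shannonEntropy (fun a => (c a : ℝ) / n)) := by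
  have hn0 : (0:ℝ) < (n:ℝ) := by exact_mod_cast hn
  set Q : 𝒳 → ℝ := fun a => (c a : ℝ) / n with hQ
  have hQ0 : ∀ a, 0 ≤ Q a := fun a => by positivity
  have hQ1 : ∑ a, Q a = 1 := by
    rw [hQ, ← Finset.sum_div]
    rw [div_eq_one_iff_eq hn0.ne']
    exact_mod_cast hc
  have hzero : ∀ a, Q a = 0 → c a = 0 := by
    intro a ha
    rw [hQ] at ha
    have : (c a : ℝ) = 0 := by
      field_simp at ha
      exact_mod_cast ha
    exact_mod_cast this
  have hexp : ∑ a, (c a : ℝ) * Real.logb 2 (Q a)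
      = -((n:ℝ) * shannonEntropy Q) := by
    rw [shannonEntropy, mul_neg, neg_neg, Finset.mul_sum]
    refine Finset.sum_congr rfl fun a _ => ?_
    have : (c a : ℝ) = (n:ℝ) * Q a := by
      rw [hQ]; field_simp
    rw [this]; ring
  have hkey : ∀ x : Fin n → 𝒳, occ x = c →
      ∏ t, Q (x t) = (2:ℝ) ^ (-((n:ℝ) * shannonEntropy Q)) := by
    intro x hx
    rw [prod_comp_occ, hx, prod_pow_eq_rpow hn Q hQ0 c hzero, hexp]
  have hsum : ((univ.filter fun x : Fin n → 𝒳 => occ x = c).card : ℝ)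
      * (2:ℝ) ^ (-((n:ℝ) * shannonEntropy Q)) ≤ 1 := by
    calc ((univ.filter fun x : Fin n → 𝒳 => occ x = c).card : ℝ)
        * (2:ℝ) ^ (-((n:ℝ) * shannonEntropy Q))
        = ∑ x ∈ univ.filter (fun x : Fin n → 𝒳 => occ x = c), ∏ t, Q (x t) := by
          rw [Finset.sum_congr rfl (fun x hx => hkey x (Finset.mem_filter.1 hx).2),
            Finset.sum_const, nsmul_eq_mul]
      _ ≤ ∑ x : Fin n → 𝒳, ∏ t, Q (x t) := by
          apply Finset.sum_le_sum_of_subset_of_nonneg (Finset.filter_subset _ _)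
          intro x _ _
          exact Finset.prod_nonneg fun t _ => hQ0 _
      _ = 1 := sum_mu Q hQ1 n
  have hpos : (0:ℝ) < (2:ℝ) ^ (-((n:ℝ) * shannonEntropy Q)) :=
    Real.rpow_pos_of_pos (by norm_num) _
  rw [Real.rpow_neg (by norm_num : (0:ℝ) ≤ 2), ← div_eq_mul_inv,
    div_le_one (Real.rpow_pos_of_pos (by norm_num) _)] at hsum
  exact hsum

lemma mu_le_of_typical (P : 𝒳 → ℝ) (hP0 : ∀ x, 0 ≤ P x) (hP1 : ∑ x, P x = 1)
    {n : ℕ} (hn : 0 < n) {α : ℝ} (x : Fin n → 𝒳) (hx : x ∈ typicalSet P α n) :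
    ∏ t, P (x t) ≤ (2:ℝ) ^ (-((n:ℝ) * (shannonEntropy P
      - α / (Fintype.card 𝒳 : ℝ) * (-∑ a, Real.logb 2 (P a))))) := by
  set k : ℝ := (Fintype.card 𝒳 : ℝ) with hk
  have hn0 : (0:ℝ) < (n:ℝ) := by exact_mod_cast hn
  have hPle1 : ∀ a, P a ≤ 1 := fun a =>
    hP1 ▸ Finset.single_le_sum (fun b _ => hP0 b) (Finset.mem_univ a)
  have hlog : ∀ a, Real.logb 2 (P a) ≤ 0 := by
    intro a
    rcases eq_or_lt_of_le (hP0 a) with h | h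
    · simp [← h, Real.logb]
    · exact Real.logb_nonpos (by norm_num) (hP0 a) (hPle1 a)
  rw [typicalSet, Finset.mem_filter] at hx
  have hocc_ge : ∀ a, (n:ℝ) * (P a - α / k) ≤ (occ x a : ℝ) := by
    intro a
    have h1 := (abs_le.1 (hx.2 a)).1
    have h2 : P a - α / k ≤ (occ x a : ℝ) / n := by linarith
    calc (n:ℝ) * (P a - α / k) ≤ (n:ℝ) * ((occ x a : ℝ) / n) :=
          mul_le_mul_of_nonneg_left h2 hn0.le
      _ = (occ x a : ℝ) := by field_simp
  by_cases hsupp : ∀ a, P a = 0 → occ x a = 0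
  · have heq : ∏ t, P (x t)
        = (2:ℝ) ^ (∑ a, (occ x a : ℝ) * Real.logb 2 (P a)) := by
      rw [prod_comp_occ]
      exact prod_pow_eq_rpow hn P hP0 (occ x) hsupp
    rw [heq]
    apply Real.rpow_le_rpow_of_exponent_le (by norm_num)
    have hterm : ∀ a, (occ x a : ℝ) * Real.logb 2 (P a)
        ≤ (n:ℝ) * (P a - α / k) * Real.logb 2 (P a) := fun a =>
      mul_le_mul_of_nonpos_right (hocc_ge a) (hlog a)
    calc ∑ a, (occ x a : ℝ) * Real.logb 2 (P a)
        ≤ ∑ a, (n:ℝ) * (P a - α / k) * Real.logb 2 (P a) :=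
          Finset.sum_le_sum fun a _ => hterm a
      _ = -((n:ℝ) * (shannonEntropy P - α / k * (-∑ a, Real.logb 2 (P a)))) := by
          rw [shannonEntropy]
          have hr : ∀ a : 𝒳, (n:ℝ) * (P a - α / k) * Real.logb 2 (P a)
              = (n:ℝ) * (P a * Real.logb 2 (P a)) - α / k * (n:ℝ) * Real.logb 2 (P a) := by
            intro a; ring
          simp_rw [hr, Finset.sum_sub_distrib, ← Finset.mul_sum]
          ring
  · push_neg at hsupp
    obtain ⟨a, ha0, hocc⟩ := hsupp
    have : ∏ t, P (x t) = 0 := by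
      rw [prod_comp_occ]
      apply Finset.prod_eq_zero (Finset.mem_univ a)
      rw [ha0]
      exact zero_pow hocc
    rw [this]
    positivity

lemma entropy_cont (P : 𝒳 → ℝ) {ε' : ℝ} (hε : 0 < ε') :
    ∃ δ > (0:ℝ), ∀ Q : 𝒳 → ℝ, (∀ a, |Q a - P a| ≤ δ) →
      |shannonEntropy Q - shannonEntropy P| ≤ ε' := by
  have hcont : Continuous fun Q : 𝒳 → ℝ => shannonEntropy Q := by
    have heq : (fun Q : 𝒳 → ℝ => shannonEntropy Q)
        = fun Q : 𝒳 → ℝ => -∑ a, (Q a * Real.log (Q a)) / Real.log 2 := by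
      funext Q
      rw [shannonEntropy]
      congr 1
      exact Finset.sum_congr rfl fun a _ => by rw [Real.logb, mul_div_assoc]
    rw [heq]
    apply Continuous.neg
    apply continuous_finset_sum
    intro a _
    exact (Real.continuous_mul_log.comp (continuous_apply a)).div_const _
  have hca : ContinuousAt (fun Q : 𝒳 → ℝ => shannonEntropy Q) P := hcont.continuousAt
  rw [Metric.continuousAt_iff] at hca
  obtain ⟨δ, hδ0, hδ⟩ := hca ε' hε
  refine ⟨δ/2, by positivity, fun Q hQ => ?_⟩
  have hdist : dist Q P ≤ δ/2 := by
    rw [dist_pi_le_iff (by positivity)]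
    intro a
    rw [Real.dist_eq]
    exact hQ a
  have := hδ (lt_of_le_of_lt hdist (by linarith))
  rw [Real.dist_eq] at this
  exact this.le

lemma growth (ε : ℝ) (hε : 0 < ε) (k : ℕ) :
    ∃ N : ℕ, ∀ n ≥ N, ((n:ℝ) + 1)^k ≤ (2:ℝ) ^ ((n:ℝ) * (ε/2)) := by
  have hr : (1:ℝ) < (2:ℝ) ^ (ε/2) := by
    rw [← Real.rpow_zero 2]
    exact Real.rpow_lt_rpow_of_exponent_lt (by norm_num) (by positivity)
  have htend := tendsto_pow_const_div_const_pow_of_one_lt k hr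
  have h2 : (0:ℝ) < 1/2^k := by positivity
  have hev : ∀ᶠ m : ℕ in Filter.atTop, ((m:ℝ))^k / ((2:ℝ)^(ε/2))^m < 1/2^k :=
    htend.eventually (Filter.eventually_mem_set.2 (Iio_mem_nhds h2))
  obtain ⟨N, hN⟩ := Filter.eventually_atTop.1 hev
  refine ⟨max N 1, fun n hn => ?_⟩
  have hn1 : (1:ℝ) ≤ (n:ℝ) := by
    exact_mod_cast le_trans (le_max_right N 1) hn
  have h1 := hN n (le_trans (le_max_left N 1) hn)
  have hrn : (0:ℝ) < ((2:ℝ)^(ε/2))^n := by positivity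
  have hnk : (n:ℝ)^k ≤ 1/2^k * ((2:ℝ)^(ε/2))^n := ((div_lt_iff₀ hrn).1 h1).le
  have h3 : ((n:ℝ)+1)^k ≤ 2^k * (n:ℝ)^k := by
    rw [← mul_pow]
    apply pow_le_pow_left₀ (by linarith)
    linarith
  have h4 : ((n:ℝ)+1)^k ≤ ((2:ℝ)^(ε/2))^n := by
    calc ((n:ℝ)+1)^k ≤ 2^k * (n:ℝ)^k := h3
      _ ≤ 2^k * (1/2^k * ((2:ℝ)^(ε/2))^n) := by
          apply mul_le_mul_of_nonneg_left hnk (by positivity)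
      _ = ((2:ℝ)^(ε/2))^n := by
          field_simp
  calc ((n:ℝ)+1)^k ≤ ((2:ℝ)^(ε/2))^n := h4
    _ = (2:ℝ) ^ ((n:ℝ) * (ε/2)) := by
        rw [← Real.rpow_natCast ((2:ℝ)^(ε/2)) n, ← Real.rpow_mul (by norm_num), mul_comm]

lemma card_typical_le (P : 𝒳 → ℝ) {n : ℕ} (hn : 0 < n) (α : ℝ) {B : ℝ}
    (hB : ∀ c : 𝒳 → ℕ, (∑ a, c a = n) →
      (∀ a, |(c a : ℝ)/n - P a| ≤ α/(Fintype.card 𝒳 : ℝ)) →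
      (n:ℝ) * shannonEntropy (fun a => (c a : ℝ)/n) ≤ B) :
    ((typicalSet P α n).card : ℝ) ≤ ((n:ℝ)+1)^(Fintype.card 𝒳) * (2:ℝ)^B := by
  set T := typicalSet P α n with hT
  have hfib : T.card = ∑ c ∈ T.image (fun x => occ x),
      (T.filter fun x => occ x = c).card :=
    Finset.card_eq_sum_card_fiberwise (fun x hx => Finset.mem_image_of_mem _ hx)
  have hoccle : ∀ c ∈ T.image (fun x => occ x), ∀ a, c a ≤ n := by
    intro c hc a
    obtain ⟨x, _, rfl⟩ := Finset.mem_image.1 hc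
    calc occ x a ≤ (univ : Finset (Fin n)).card := Finset.card_filter_le _ _
      _ = n := by simp
  have himg : (T.image (fun x => occ x)).card ≤ (n+1)^(Fintype.card 𝒳) := by
    have := Finset.card_le_card_of_injOn
      (s := T.image (fun x => occ x)) (t := (univ : Finset (𝒳 → Fin (n+1))))
      (f := fun (c : 𝒳 → ℕ) (a : 𝒳) => (⟨c a % (n+1), Nat.mod_lt _ (Nat.succ_pos n)⟩ : Fin (n+1)))
      (fun c _ => Finset.mem_univ _) ?_
    · calc (T.image (fun x => occ x)).card ≤ (univ : Finset (𝒳 → Fin (n+1))).card := this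
        _ = (n+1)^(Fintype.card 𝒳) := by
          rw [Finset.card_univ, Fintype.card_fun, Fintype.card_fin]
    · intro c hc c' hc' hcc
      funext a
      have h1 : c a % (n+1) = c' a % (n+1) := by
        have := congrFun hcc a
        simpa using this
      rw [Nat.mod_eq_of_lt (Nat.lt_succ_of_le (hoccle c hc a)),
        Nat.mod_eq_of_lt (Nat.lt_succ_of_le (hoccle c' hc' a))] at h1
      exact h1
  have hterm : ∀ c ∈ T.image (fun x => occ x),
      ((T.filter fun x => occ x = c).card : ℝ) ≤ (2:ℝ)^B := by
    intro c hc
    obtain ⟨x₀, hx₀, rfl⟩ := Finset.mem_image.1 hc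
    have hsum : ∑ a, occ x₀ a = n := sum_occ x₀
    have htyp : ∀ a, |((occ x₀) a : ℝ)/n - P a| ≤ α/(Fintype.card 𝒳 : ℝ) := by
      have := (Finset.mem_filter.1 (hT ▸ hx₀)).2
      exact this
    have h1 : ((T.filter fun x => occ x = occ x₀).card : ℝ)
        ≤ ((univ.filter fun x : Fin n → 𝒳 => occ x = occ x₀).card : ℝ) := by
      exact_mod_cast Finset.card_le_card
        (Finset.filter_subset_filter _ (Finset.subset_univ _))
    refine h1.trans ((type_count hn (occ x₀) hsum).trans ?_)
    exact Real.rpow_le_rpow_of_exponent_le one_le_two (hB (occ x₀) hsum htyp)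
  calc ((typicalSet P α n).card : ℝ)
      = ∑ c ∈ T.image (fun x => occ x), ((T.filter fun x => occ x = c).card : ℝ) := by
        rw [← hT, hfib]; push_cast; ring
    _ ≤ ∑ _c ∈ T.image (fun x => occ x), (2:ℝ)^B := Finset.sum_le_sum hterm
    _ = ((T.image (fun x => occ x)).card : ℝ) * (2:ℝ)^B := by
        rw [Finset.sum_const, nsmul_eq_mul]
    _ ≤ ((n:ℝ)+1)^(Fintype.card 𝒳) * (2:ℝ)^B := by
        apply mul_le_mul_of_nonneg_right _ (le_of_lt (Real.rpow_pos_of_pos (by norm_num) _))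
        calc ((T.image (fun x => occ x)).card : ℝ) ≤ (((n+1)^(Fintype.card 𝒳) : ℕ) : ℝ) := by
              exact_mod_cast himg
          _ = ((n:ℝ)+1)^(Fintype.card 𝒳) := by push_cast; ring


end Helpers

/-- **Cardinality of the typical set**: for every `ε > 0` there is `α₀ > 0` such that for
all `α ∈ (0, α₀]` and all sufficiently large `n`,
`2^{n(H(P)−ε)} ≤ |𝒯^n_{P,α}| ≤ 2^{n(H(P)+ε)}`. -/
theorem typicalSet_card_bounds
    {𝒳 : Type*} [Fintype 𝒳] [Nonempty 𝒳] [DecidableEq 𝒳]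
    (P : 𝒳 → ℝ) (hP0 : ∀ x, 0 ≤ P x) (hP1 : ∑ x, P x = 1) :
    ∀ ε > (0 : ℝ), ∃ α₀ > (0 : ℝ), ∀ α ∈ Set.Ioc (0 : ℝ) α₀, ∃ N : ℕ, ∀ n ≥ N,
      (2 : ℝ) ^ ((n : ℝ) * (shannonEntropy P - ε)) ≤ ((typicalSet P α n).card : ℝ) ∧
      ((typicalSet P α n).card : ℝ) ≤ (2 : ℝ) ^ ((n : ℝ) * (shannonEntropy P + ε)) := by
  intro ε hε
  set k : ℝ := (Fintype.card 𝒳 : ℝ) with hk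
  have hk0 : (0:ℝ) < k := kpos
  set H : ℝ := shannonEntropy P with hH
  set M : ℝ := -∑ a, Real.logb 2 (P a) with hM
  have hPle1 : ∀ a, P a ≤ 1 := fun a =>
    hP1 ▸ Finset.single_le_sum (fun b _ => hP0 b) (Finset.mem_univ a)
  have hlog : ∀ a : 𝒳, Real.logb 2 (P a) ≤ 0 := by
    intro a
    rcases eq_or_lt_of_le (hP0 a) with h | h
    · simp [← h, Real.logb]
    · exact Real.logb_nonpos (by norm_num) (hP0 a) (hPle1 a)
  have hM0 : 0 ≤ M := by
    rw [hM, neg_nonneg]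
    exact Finset.sum_nonpos fun a _ => hlog a
  obtain ⟨δ, hδ0, hδ⟩ := entropy_cont P (show (0:ℝ) < ε/2 by linarith)
  refine ⟨min (δ * k) (ε * k / (2 * (M + 1))), by positivity, ?_⟩
  rintro α ⟨hα0, hαle⟩
  have hαδ : α / k ≤ δ := by
    rw [div_le_iff₀ hk0]
    calc α ≤ min (δ * k) (ε * k / (2 * (M + 1))) := hαle
      _ ≤ δ * k := min_le_left _ _
  have hαM : α / k * M ≤ ε/2 := by
    have h1 : α ≤ ε * k / (2*(M+1)) := le_trans hαle (min_le_right _ _)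
    have h2 : α / k * M ≤ (ε * k / (2*(M+1))) / k * M := by
      gcongr
    have h3 : (ε * k / (2*(M+1))) / k * M = ε * M / (2*(M+1)) := by
      field_simp
    rw [h3] at h2
    refine h2.trans ?_
    rw [div_le_div_iff₀ (by positivity) (by norm_num)]
    nlinarith
  obtain ⟨N₃, hN₃⟩ := growth ε hε (Fintype.card 𝒳)
  refine ⟨max (max ⌈(2 * k^3 / α^2)⌉₊ ⌈(2/ε)⌉₊) (max N₃ 1), fun n hn => ?_⟩
  have hn1 : 0 < n :=
    lt_of_lt_of_le Nat.one_pos (le_trans (le_trans (le_max_right N₃ 1) (le_max_right _ _)) hn)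
  have hn0 : (0:ℝ) < (n:ℝ) := by exact_mod_cast hn1
  have hnN1 : 2 * k^3 / α^2 ≤ (n:ℝ) := by
    refine le_trans (Nat.le_ceil _) ?_
    exact_mod_cast le_trans (le_trans (Nat.le_max_left _ _) (le_max_left _ _)) hn
  have hnN2 : (1:ℝ) ≤ (n:ℝ) * ε / 2 := by
    have h1 : (2:ℝ)/ε ≤ (n:ℝ) := by
      refine le_trans (Nat.le_ceil _) ?_
      exact_mod_cast le_trans (le_trans (Nat.le_max_right _ _) (le_max_left _ _)) hn
    rw [div_le_iff₀ hε] at h1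
    rw [le_div_iff₀ (by norm_num : (0:ℝ) < 2)]
    linarith
  have hgrow := hN₃ n (le_trans (le_trans (le_max_left N₃ 1) (le_max_right _ _)) hn)
  constructor
  · -- lower bound
    have hmeas := typical_measure P hP0 hP1 hα0 hn1 hnN1
    have hμle : ∀ x ∈ typicalSet P α n,
        ∏ t, P (x t) ≤ (2:ℝ) ^ (-((n:ℝ) * (H - ε/2))) := by
      intro x hx
      refine le_trans (mu_le_of_typical P hP0 hP1 hn1 x hx) ?_
      apply Real.rpow_le_rpow_of_exponent_le one_le_two
      rw [neg_le_neg_iff]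
      have : H - ε/2 ≤ H - α / k * M := by linarith
      calc (n:ℝ) * (H - ε/2) ≤ (n:ℝ) * (H - α / k * M) :=
            mul_le_mul_of_nonneg_left this hn0.le
        _ = (n:ℝ) * (H - α / ↑(Fintype.card 𝒳) * (-∑ a, Real.logb 2 (P a))) := by
            rw [← hk, ← hM]
    have hcard : (1:ℝ)/2 ≤ ((typicalSet P α n).card : ℝ) * (2:ℝ) ^ (-((n:ℝ) * (H - ε/2))) := by
      calc (1:ℝ)/2 ≤ ∑ x ∈ typicalSet P α n, ∏ t, P (x t) := hmeas
        _ ≤ ∑ _x ∈ typicalSet P α n, (2:ℝ) ^ (-((n:ℝ) * (H - ε/2))) :=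
            Finset.sum_le_sum hμle
        _ = ((typicalSet P α n).card : ℝ) * (2:ℝ) ^ (-((n:ℝ) * (H - ε/2))) := by
            rw [Finset.sum_const, nsmul_eq_mul]
    have hpos2 : (0:ℝ) < (2:ℝ) ^ ((n:ℝ) * (H - ε/2)) :=
      Real.rpow_pos_of_pos (by norm_num) _
    have h5 : (1:ℝ)/2 * (2:ℝ) ^ ((n:ℝ) * (H - ε/2)) ≤ ((typicalSet P α n).card : ℝ) := by
      have := mul_le_mul_of_nonneg_right hcard hpos2.le
      rw [mul_assoc, ← Real.rpow_add (by norm_num : (0:ℝ) < 2), neg_add_cancel,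
        Real.rpow_zero, mul_one] at this
      exact this
    refine le_trans ?_ h5
    have heq : (1:ℝ)/2 * (2:ℝ) ^ ((n:ℝ) * (H - ε/2))
        = (2:ℝ) ^ ((n:ℝ) * (H - ε/2) - 1) := by
      rw [Real.rpow_sub (by norm_num : (0:ℝ) < 2), Real.rpow_one]
      ring
    rw [heq]
    apply Real.rpow_le_rpow_of_exponent_le one_le_two
    nlinarith
  · -- upper bound
    have hB : ∀ c : 𝒳 → ℕ, (∑ a, c a = n) →
        (∀ a, |(c a : ℝ)/n - P a| ≤ α/(Fintype.card 𝒳 : ℝ)) →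
        (n:ℝ) * shannonEntropy (fun a => (c a : ℝ)/n) ≤ (n:ℝ) * (H + ε/2) := by
      intro c hc htyp
      apply mul_le_mul_of_nonneg_left _ hn0.le
      have hclose : ∀ a, |(c a : ℝ)/n - P a| ≤ δ := by
        intro a
        exact (htyp a).trans hαδ
      have := hδ (fun a => (c a : ℝ)/n) hclose
      have h2 := (abs_le.1 this).2
      rw [hH]
      linarith
    have h6 := card_typical_le P hn1 α hB
    refine h6.trans ?_
    calc ((n:ℝ)+1)^(Fintype.card 𝒳) * (2:ℝ)^((n:ℝ) * (H + ε/2))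
        ≤ (2:ℝ) ^ ((n:ℝ) * (ε/2)) * (2:ℝ)^((n:ℝ) * (H + ε/2)) := by
          apply mul_le_mul_of_nonneg_right hgrow
            (le_of_lt (Real.rpow_pos_of_pos (by norm_num) _))
      _ = (2:ℝ) ^ ((n:ℝ) * (H + ε)) := by
          rw [← Real.rpow_add (by norm_num : (0:ℝ) < 2)]
          congr 1
          ring

end
end
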